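/- Let q : (G,𝒫) → (H,𝒬) be an (L,C,M)-quasi-isometry of group pairs. If (H,𝒬) has finite packing, then (G,𝒫) has finite packing. Here a group pair (G,𝒫) has finite packing if there is a finite subset D ⊆ G/𝒫 such that for every finite set of distinct cosets {g₁P₁, …, g_dP_d} ⊆ G/𝒫 with ⋂_{i=1}^d g_iP_ig_i⁻¹ infinite, there is g ∈ G with g·g_iP_i ∈ D for all i. -/

import Mathlib

/-!
Push each coset `A` of a packing family `F` of `(G, 𝒫)` to a coset `φ A` of `(H, 𝒬)` at
Hausdorff distance `< M` from `q(A)`. Since `q` has finite fibres, it maps the infinite common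
stabilizer `K` of `F` to an infinite set `q(K)`, which lies in a bounded neighbourhood of every
stabilizer of a coset `φ A`. In a finitely generated group, bounded neighbourhoods of finitely
many subgroups intersect inside a bounded neighbourhood of their intersection, so the common
stabilizer of the cosets `φ A` is infinite too. Finite packing of `(H, 𝒬)` then translates them
by some `h` into its fixed finite set of cosets; taking `x` with `q x` close to `h⁻¹`, every
`x⁻¹ A` passes within a uniformly bounded distance of `1`, and only finitely many cosets do.
-/

open scoped Pointwise ENNReal NNReal

namespace CIC

variable {G : Type*} [Group G] {H : Type*} [Group H]

/-- Word length of `g` with respect to the generating set `S`: the least `n` such that `g`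
is a product of `n` elements of `S ∪ S⁻¹`. -/
noncomputable def wordLength (S : Set G) (g : G) : ℕ :=
  sInf {n | ∃ l : List G, (∀ x ∈ l, x ∈ S ∨ x⁻¹ ∈ S) ∧ l.length = n ∧ l.prod = g}

/-- The word metric on `G` associated to the generating set `S`. -/
noncomputable def wdist (S : Set G) (g h : G) : ℕ := wordLength S (g⁻¹ * h)

/-- Closed `r`-neighborhood of `A` with respect to the word metric of `S`. -/
def nbhd (S : Set G) (r : ℝ) (A : Set G) : Set G :=
  {x | ∃ a ∈ A, (wdist S a x : ℝ) ≤ r}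

/-- Hausdorff distance between subsets of `G`, valued in `[0,∞]`: the infimum of those
`r ≥ 0` such that each set is contained in the closed `r`-neighborhood of the other,
the infimum of the empty set being `∞`. -/
noncomputable def hdist (S : Set G) (A B : Set G) : ℝ≥0∞ :=
  ⨅ (r : ℝ≥0) (_ : A ⊆ nbhd S (r : ℝ) B ∧ B ⊆ nbhd S (r : ℝ) A), (r : ℝ≥0∞)

/-- The conjugate subgroup `g P g⁻¹`. -/
def conj (g : G) (P : Subgroup G) : Subgroup G := P.map (MulAut.conj g).toMonoidHom

/-- The set `G/𝒫` of all left cosets `gP` with `g ∈ G` and `P ∈ 𝒫`. -/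
def cosets (Ps : Finset (Subgroup G)) : Set (Set G) :=
  {A | ∃ (g : G) (P : Subgroup G), P ∈ Ps ∧ A = g • (P : Set G)}

/-- A group pair `(G, 𝒫)`: `S` is a finite generating set of `G` and `𝒫` is a finite
collection of infinite subgroups of `G`. -/
structure IsGroupPair (S : Finset G) (Ps : Finset (Subgroup G)) : Prop where
  generates : Subgroup.closure (S : Set G) = ⊤
  infinite : ∀ P ∈ Ps, (P : Set G).Infinite

/-- An `(L,C,M)`-quasi-isometry of group pairs `q : (G,𝒫) → (H,𝒬)`. -/
structure IsPairQI (S : Finset G) (T : Finset H)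
    (Ps : Finset (Subgroup G)) (Qs : Finset (Subgroup H))
    (L C M : ℝ≥0) (q : G → H) : Prop where
  one_le : 1 ≤ L
  lower : ∀ a b : G, (wdist (S : Set G) a b : ℝ) / L - C ≤ (wdist (T : Set H) (q a) (q b) : ℝ)
  upper : ∀ a b : G, (wdist (T : Set H) (q a) (q b) : ℝ) ≤ L * (wdist (S : Set G) a b : ℝ) + C
  dense : ∀ y : H, ∃ x : G, (wdist (T : Set H) (q x) y : ℝ) ≤ C
  coset_fwd : ∀ A ∈ cosets Ps, ∃ B ∈ cosets Qs, hdist (T : Set H) (q '' A) B < (M : ℝ≥0∞)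
  coset_bwd : ∀ B ∈ cosets Qs, ∃ A ∈ cosets Ps, hdist (T : Set H) (q '' A) B < (M : ℝ≥0∞)

/-- `(G,𝒫)` has finite packing: there is a finite set `D` of cosets such that every finite
set of distinct cosets `{g₁P₁, …, g_dP_d}` with `⋂ᵢ gᵢPᵢgᵢ⁻¹` infinite can be translated
into `D`.  (For a left coset `A = gP` the subgroup `gPg⁻¹` is exactly the stabilizer of `A`
under the left multiplication action of `G` on subsets.) -/
def FinitePacking (Ps : Finset (Subgroup G)) : Prop :=
  ∃ D : Finset (Set G), ↑D ⊆ cosets Ps ∧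
    ∀ F : Finset (Set G), ↑F ⊆ cosets Ps →
      ((⨅ A ∈ F, MulAction.stabilizer G A : Subgroup G) : Set G).Infinite →
      ∃ g : G, ∀ A ∈ F, g • A ∈ D

open MulAction

section WordMetric

variable {S : Set G}

lemma wordLength_spec (hgen : Subgroup.closure S = ⊤) (g : G) :
    ∃ l : List G, (∀ x ∈ l, x ∈ S ∨ x⁻¹ ∈ S) ∧ l.length = wordLength S g ∧ l.prod = g := by
  have hne :
      {n | ∃ l : List G, (∀ x ∈ l, x ∈ S ∨ x⁻¹ ∈ S) ∧ l.length = n ∧ l.prod = g}.Nonempty := by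
    have hg : g ∈ Submonoid.closure (S ∪ S⁻¹) := by
      rw [← Subgroup.closure_toSubmonoid, hgen]; trivial
    obtain ⟨l, hl, rfl⟩ := Submonoid.exists_list_of_mem_closure hg
    exact ⟨l.length, l, fun x hx => hl x hx, rfl, rfl⟩
  exact Nat.sInf_mem hne

lemma wordLength_le_length {l : List G} (hl : ∀ x ∈ l, x ∈ S ∨ x⁻¹ ∈ S) :
    wordLength S l.prod ≤ l.length :=
  Nat.sInf_le ⟨l, hl, rfl, rfl⟩

@[simp]
lemma wordLength_one : wordLength S (1 : G) = 0 :=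
  Nat.eq_zero_of_le_zero (wordLength_le_length (l := []) (by simp))

lemma wordLength_mul_le (hgen : Subgroup.closure S = ⊤) (g h : G) :
    wordLength S (g * h) ≤ wordLength S g + wordLength S h := by
  obtain ⟨l₁, h₁, hl₁, rfl⟩ := wordLength_spec hgen g
  obtain ⟨l₂, h₂, hl₂, rfl⟩ := wordLength_spec hgen h
  rw [← hl₁, ← hl₂, ← List.length_append, ← List.prod_append]
  exact wordLength_le_length fun x hx => (List.mem_append.mp hx).elim (h₁ x) (h₂ x)

lemma wordLength_inv_le (hgen : Subgroup.closure S = ⊤) (g : G) :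
    wordLength S g⁻¹ ≤ wordLength S g := by
  obtain ⟨l, hl, hlen, rfl⟩ := wordLength_spec hgen g
  rw [← hlen, List.prod_inv_reverse]
  calc _ ≤ ((l.map fun x => x⁻¹).reverse).length := wordLength_le_length fun x hx => by
        obtain ⟨y, hy, rfl⟩ := List.mem_map.mp (List.mem_reverse.mp hx)
        simpa [or_comm] using hl y hy
    _ = l.length := by simp

lemma wordLength_inv (hgen : Subgroup.closure S = ⊤) (g : G) :
    wordLength S g⁻¹ = wordLength S g :=
  le_antisymm (wordLength_inv_le hgen g) (by simpa using wordLength_inv_le hgen g⁻¹)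

lemma finite_setOf_wordLength_le (hS : S.Finite) (hgen : Subgroup.closure S = ⊤) (r : ℝ) :
    {g : G | (wordLength S g : ℝ) ≤ r}.Finite := by
  have : Finite ↥(S ∪ S⁻¹) := (hS.union hS.inv).to_subtype
  refine ((List.finite_length_le ↥(S ∪ S⁻¹) ⌈r⌉₊).image
    fun l => (l.map Subtype.val).prod).subset fun g hg => ?_
  obtain ⟨l, hl, hlen, rfl⟩ := wordLength_spec hgen g
  lift l to List ↥(S ∪ S⁻¹) using fun x hx => hl x hx
  rw [Set.mem_ofPred_eq, ← hlen, List.length_map] at hg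
  exact ⟨l, by exact_mod_cast hg.trans (Nat.le_ceil r), rfl⟩

@[simp]
lemma wdist_self (a : G) : wdist S a a = 0 := by
  simp [wdist]

lemma wdist_comm (hgen : Subgroup.closure S = ⊤) (a b : G) : wdist S a b = wdist S b a := by
  rw [wdist, wdist, ← wordLength_inv hgen, mul_inv_rev, inv_inv]

lemma wdist_triangle (hgen : Subgroup.closure S = ⊤) (a b c : G) :
    (wdist S a c : ℝ) ≤ wdist S a b + wdist S b c := by
  have := wordLength_mul_le hgen (a⁻¹ * b) (b⁻¹ * c)
  rw [show a⁻¹ * b * (b⁻¹ * c) = a⁻¹ * c by group] at this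
  exact_mod_cast this

@[simp]
lemma wdist_mul_left (g a b : G) : wdist S (g * a) (g * b) = wdist S a b := by
  simp [wdist, mul_assoc]

end WordMetric

section Neighborhoods

variable {S : Set G}

lemma nbhd_mono {r r' : ℝ} (h : r ≤ r') (A : Set G) : nbhd S r A ⊆ nbhd S r' A :=
  fun _ ⟨a, ha, hx⟩ => ⟨a, ha, hx.trans h⟩

lemma mem_nbhd_add_of_wdist_le (hgen : Subgroup.closure S = ⊤) {A : Set G} {r s : ℝ} {x y : G}
    (hy : y ∈ nbhd S s A) (hyx : (wdist S y x : ℝ) ≤ r) : x ∈ nbhd S (s + r) A := by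
  obtain ⟨a, ha, hay⟩ := hy
  exact ⟨a, ha, (wdist_triangle hgen a y x).trans (add_le_add hay hyx)⟩

lemma nbhd_subset_nbhd (hgen : Subgroup.closure S = ⊤) {A B : Set G} {r s : ℝ}
    (hAB : A ⊆ nbhd S s B) : nbhd S r A ⊆ nbhd S (s + r) B :=
  fun _ ⟨_, ha, hax⟩ => mem_nbhd_add_of_wdist_le hgen (hAB ha) hax

lemma mul_mem_nbhd_smul_iff {A : Set G} {r : ℝ} (g x : G) :
    g * x ∈ nbhd S r (g • A) ↔ x ∈ nbhd S r A := by
  constructor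
  · rintro ⟨_, ⟨a, ha, rfl⟩, hax⟩
    exact ⟨a, ha, by simpa using hax⟩
  · rintro ⟨a, ha, hax⟩
    exact ⟨g * a, Set.smul_mem_smul_set ha, by simpa using hax⟩

lemma finite_nbhd (hS : S.Finite) (hgen : Subgroup.closure S = ⊤) {A : Set G}
    (hA : A.Finite) (r : ℝ) : (nbhd S r A).Finite :=
  (hA.biUnion fun a _ => (finite_setOf_wordLength_le hS hgen r).image (a * ·)).subset
    fun x ⟨a, ha, hax⟩ => Set.mem_biUnion ha ⟨a⁻¹ * x, hax, by simp⟩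

lemma subset_nbhd_of_hdist_lt {A B : Set G} {M : ℝ≥0} (h : hdist S A B < M) :
    A ⊆ nbhd S M B ∧ B ⊆ nbhd S M A := by
  obtain ⟨r, hr⟩ := iInf_lt_iff.mp h
  obtain ⟨⟨hAB, hBA⟩, hrM⟩ := iInf_lt_iff.mp hr
  have hrM : (r : ℝ) ≤ M := by exact_mod_cast hrM.le
  exact ⟨hAB.trans (nbhd_mono hrM B), hBA.trans (nbhd_mono hrM A)⟩

end Neighborhoods

section Stabilizers

variable {S : Set G}

lemma stabilizer_subset_nbhd (hgen : Subgroup.closure S = ⊤) {A : Set G} {a : G} (ha : a ∈ A) :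
    (stabilizer G A : Set G) ⊆ nbhd S (wordLength S a) A := by
  intro k hk
  refine ⟨k * a, ?_, ?_⟩
  · rw [← mem_stabilizer_iff.mp hk]
    exact Set.smul_mem_smul_set ha
  · simp [wdist, wordLength_inv hgen]

lemma smul_subgroup_subset_nbhd_stabilizer (h : G) (Q : Subgroup G) :
    h • (Q : Set G) ⊆ nbhd S (wordLength S h) (stabilizer G (h • (Q : Set G))) := by
  rintro _ ⟨p, hp, rfl⟩
  refine ⟨h * p * h⁻¹, ?_, ?_⟩
  · rw [SetLike.mem_coe, mem_stabilizer_iff, smul_smul, inv_mul_cancel_right, ← smul_smul,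
      smul_coe_set hp]
  · simp [wdist, mul_assoc]

lemma exists_nbhd_inter_nbhd_subset_nbhd_inf (hS : S.Finite) (hgen : Subgroup.closure S = ⊤)
    (P Q : Subgroup G) (r s : ℝ) :
    ∃ t : ℝ, nbhd S r (P : Set G) ∩ nbhd S s (Q : Set G) ⊆
      nbhd S t ((P ⊓ Q : Subgroup G) : Set G) := by
  -- A point near `p ∈ P` and `e ∈ Q` gives the short element `u = p⁻¹ e` with `p u ∈ Q`; fixing
  -- one such witness `f u ∈ P` for each of the finitely many short `u` makes `p (f u)⁻¹ ∈ P ⊓ Q`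
  -- a uniformly close point.
  set U := {u : G | (wordLength S u : ℝ) ≤ r + s ∧ ∃ p ∈ P, p * u ∈ Q}
  have hU : U.Finite := (finite_setOf_wordLength_le hS hgen (r + s)).subset fun _ hu => hu.1
  choose! f hfP hfQ using fun u (hu : u ∈ U) => hu.2
  obtain ⟨m, hm⟩ := (hU.image fun u => (wordLength S (f u) : ℝ)).bddAbove
  refine ⟨m + r, fun x ⟨⟨p, hp, hpx⟩, ⟨e, he, hex⟩⟩ => ?_⟩
  have hu : p⁻¹ * e ∈ U := by
    refine ⟨?_, p, hp, by simpa using he⟩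
    have := wdist_triangle hgen p x e
    rw [wdist_comm hgen x e] at this
    exact this.trans (add_le_add hpx hex)
  set u := p⁻¹ * e
  refine ⟨p * (f u)⁻¹, Subgroup.mem_inf.mpr ⟨mul_mem hp (inv_mem (hfP u hu)), ?_⟩, ?_⟩
  · rw [show p * (f u)⁻¹ = e * (f u * u)⁻¹ by simp [u, mul_assoc]]
    exact mul_mem he (inv_mem (hfQ u hu))
  · calc (wdist S (p * (f u)⁻¹) x : ℝ) = wordLength S (f u * (p⁻¹ * x)) := by
          simp [wdist, mul_assoc]
      _ ≤ wordLength S (f u) + wordLength S (p⁻¹ * x) := by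
          exact_mod_cast wordLength_mul_le hgen _ _
      _ ≤ m + r := add_le_add (hm ⟨u, hu, rfl⟩) hpx

lemma exists_biInter_nbhd_subset_nbhd_iInf (hS : S.Finite) (hgen : Subgroup.closure S = ⊤)
    {ι : Type*} (F : Finset ι) (P : ι → Subgroup G) (r : ι → ℝ) :
    ∃ t : ℝ, ⋂ i ∈ F, nbhd S (r i) (P i : Set G) ⊆
      nbhd S t ((⨅ i ∈ F, P i : Subgroup G) : Set G) := by
  classical
  induction F using Finset.induction with
  | empty => exact ⟨0, fun x _ => ⟨x, by simp, by simp⟩⟩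
  | insert i F _ ih =>
    obtain ⟨t, ht⟩ := ih
    obtain ⟨t', ht'⟩ :=
      exists_nbhd_inter_nbhd_subset_nbhd_inf hS hgen (P i) (⨅ j ∈ F, P j) (r i) t
    refine ⟨t', fun x hx => ?_⟩
    rw [Finset.set_biInter_insert] at hx
    rw [Finset.iInf_insert]
    exact ht' ⟨hx.1, ht hx.2⟩

end Stabilizers

section Cosets

variable {S : Set G} {Ps : Finset (Subgroup G)}

lemma cosets_nonempty {A : Set G} (hA : A ∈ cosets Ps) : A.Nonempty := by
  obtain ⟨g, P, -, rfl⟩ := hA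
  exact ⟨g, 1, P.one_mem, mul_one g⟩

lemma smul_mem_cosets {A : Set G} (hA : A ∈ cosets Ps) (g : G) : g • A ∈ cosets Ps := by
  obtain ⟨a, P, hP, rfl⟩ := hA
  exact ⟨g * a, P, hP, smul_smul g a _⟩

lemma finite_setOf_one_mem_nbhd (hS : S.Finite) (hgen : Subgroup.closure S = ⊤)
    (Ps : Finset (Subgroup G)) (r : ℝ) : {A ∈ cosets Ps | (1 : G) ∈ nbhd S r A}.Finite := by
  refine (((finite_setOf_wordLength_le hS hgen r).prod Ps.finite_toSet).image
    fun gP : G × Subgroup G => gP.1⁻¹ • (gP.2 : Set G)).subset ?_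
  rintro _ ⟨⟨g, P, hP, rfl⟩, _, ⟨p, hp, rfl⟩, hr⟩
  refine ⟨((g * p)⁻¹, P), ⟨by simpa [wdist] using hr, hP⟩, ?_⟩
  simp only [inv_inv, ← smul_smul, smul_coe_set hp]

lemma exists_one_mem_nbhd (D : Finset (Set G)) (hD : ∀ B ∈ D, B.Nonempty) :
    ∃ R : ℝ, ∀ B ∈ D, (1 : G) ∈ nbhd S R B := by
  choose! b hb using hD
  exact ⟨(D.sup fun B => wdist S (b B) 1 : ℕ), fun B hB =>
    ⟨b B, hb B hB, by exact_mod_cast Finset.le_sup (f := fun B => wdist S (b B) 1) hB⟩⟩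

end Cosets

namespace IsPairQI

variable {S : Finset G} {T : Finset H} {Ps : Finset (Subgroup G)} {Qs : Finset (Subgroup H)}
  {L C M : ℝ≥0} {q : G → H}

lemma wdist_le (hq : IsPairQI S T Ps Qs L C M q) (a b : G) :
    (wdist (S : Set G) a b : ℝ) ≤ L * (wdist (T : Set H) (q a) (q b) + C) := by
  have hL : (0 : ℝ) < L := zero_lt_one.trans_le (by exact_mod_cast hq.one_le)
  rw [mul_comm, ← div_le_iff₀ hL]
  linarith [hq.lower a b]

lemma image_nbhd_subset (hq : IsPairQI S T Ps Qs L C M q) (A : Set G) (r : ℝ) :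
    q '' nbhd (S : Set G) r A ⊆ nbhd (T : Set H) (L * r + C) (q '' A) := by
  rintro _ ⟨x, ⟨a, ha, hax⟩, rfl⟩
  exact ⟨q a, Set.mem_image_of_mem q ha, (hq.upper a x).trans (by gcongr)⟩

lemma mem_nbhd_of_apply_mem_nbhd (hq : IsPairQI S T Ps Qs L C M q) {A : Set G} {r : ℝ} {x : G}
    (hx : q x ∈ nbhd (T : Set H) r (q '' A)) : x ∈ nbhd (S : Set G) (L * (r + C)) A := by
  obtain ⟨_, ⟨a, ha, rfl⟩, hax⟩ := hx
  exact ⟨a, ha, (hq.wdist_le a x).trans (by gcongr)⟩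

lemma infinite_image (hq : IsPairQI S T Ps Qs L C M q) (hgen : Subgroup.closure (S : Set G) = ⊤)
    {K : Set G} (hK : K.Infinite) : (q '' K).Infinite := by
  refine fun hfin => hK ((hfin.preimage' fun y _ => ?_).subset (Set.subset_preimage_image q K))
  rcases (q ⁻¹' {y}).eq_empty_or_nonempty with he | ⟨a, ha⟩
  · simp [he]
  · refine (finite_nbhd S.finite_toSet hgen (Set.finite_singleton a) (L * (0 + C))).subset
      fun x hx => hq.mem_nbhd_of_apply_mem_nbhd ⟨q a, ⟨a, rfl, rfl⟩, ?_⟩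
    simp_all

lemma image_stabilizer_subset_nbhd_stabilizer (hq : IsPairQI S T Ps Qs L C M q)
    (hgenS : Subgroup.closure (S : Set G) = ⊤) (hgenT : Subgroup.closure (T : Set H) = ⊤)
    {A : Set G} {B : Set H} (hA : A.Nonempty) (hB : B ∈ cosets Qs)
    (hAB : hdist (T : Set H) (q '' A) B < M) :
    ∃ c : ℝ, q '' (stabilizer G A : Set G) ⊆ nbhd (T : Set H) c (stabilizer H B) := by
  obtain ⟨a, ha⟩ := hA
  obtain ⟨h, Q, -, rfl⟩ := hB
  refine ⟨wordLength (T : Set H) h + (M + (L * wordLength (S : Set G) a + C)), ?_⟩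
  calc q '' (stabilizer G A : Set G)
      _ ⊆ q '' nbhd (S : Set G) (wordLength (S : Set G) a) A :=
        Set.image_mono (stabilizer_subset_nbhd hgenS ha)
      _ ⊆ nbhd (T : Set H) (L * wordLength (S : Set G) a + C) (q '' A) :=
        hq.image_nbhd_subset _ _
      _ ⊆ nbhd (T : Set H) (M + (L * wordLength (S : Set G) a + C)) (h • (Q : Set H)) :=
        nbhd_subset_nbhd hgenT (subset_nbhd_of_hdist_lt hAB).1
      _ ⊆ _ := nbhd_subset_nbhd hgenT (smul_subgroup_subset_nbhd_stabilizer h Q)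

lemma infinite_iInf_stabilizer (hq : IsPairQI S T Ps Qs L C M q)
    (hgenS : Subgroup.closure (S : Set G) = ⊤) (hgenT : Subgroup.closure (T : Set H) = ⊤)
    {F : Finset (Set G)} (hF : ∀ A ∈ F, A.Nonempty) {φ : Set G → Set H}
    (hφQ : ∀ A ∈ F, φ A ∈ cosets Qs) (hφM : ∀ A ∈ F, hdist (T : Set H) (q '' A) (φ A) < M)
    (hK : ((⨅ A ∈ F, stabilizer G A : Subgroup G) : Set G).Infinite) :
    ((⨅ A ∈ F, stabilizer H (φ A) : Subgroup H) : Set H).Infinite := by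
  choose! c hc using fun A (hA : A ∈ F) =>
    hq.image_stabilizer_subset_nbhd_stabilizer hgenS hgenT (hF A hA) (hφQ A hA) (hφM A hA)
  obtain ⟨t, ht⟩ := exists_biInter_nbhd_subset_nbhd_iInf T.finite_toSet hgenT F
    (fun A => stabilizer H (φ A)) c
  have hsub : q '' ((⨅ A ∈ F, stabilizer G A : Subgroup G) : Set G) ⊆
      nbhd (T : Set H) t ((⨅ A ∈ F, stabilizer H (φ A) : Subgroup H) : Set H) :=
    fun y hy => ht (Set.mem_iInter₂.mpr fun A hA =>
      hc A hA (Set.image_mono (SetLike.coe_subset_coe.mpr (iInf₂_le A hA)) hy))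
  exact fun hfin =>
    hq.infinite_image hgenS hK ((finite_nbhd T.finite_toSet hgenT hfin t).subset hsub)

end IsPairQI

/-- Finite packing is a quasi-isometry invariant of group pairs. -/
theorem statement15 (S : Finset G) (T : Finset H)
    (Ps : Finset (Subgroup G)) (Qs : Finset (Subgroup H))
    (hG : IsGroupPair S Ps) (hH : IsGroupPair T Qs)
    (L C M : ℝ≥0) (q : G → H) (hq : IsPairQI S T Ps Qs L C M q)
    (hfp : FinitePacking Qs) :
    FinitePacking Ps := by
  obtain ⟨D', hD'Q, hD'⟩ := hfp
  obtain ⟨R, hR⟩ :=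
    exists_one_mem_nbhd (S := (T : Set H)) D' fun B hB => cosets_nonempty (hD'Q hB)
  have hD := finite_setOf_one_mem_nbhd S.finite_toSet hG.generates Ps (L * (M + (R + C) + C))
  refine ⟨hD.toFinset, fun A hA => (hD.mem_toFinset.mp hA).1, fun F hF hK => ?_⟩
  choose! φ hφQ hφM using fun A (hA : A ∈ F) => hq.coset_fwd A (hF hA)
  have hF'Q : (↑(F.image φ) : Set (Set H)) ⊆ cosets Qs := by
    simpa [Set.subset_def] using hφQ
  have hK' : ((⨅ B ∈ F.image φ, stabilizer H B : Subgroup H) : Set H).Infinite := by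
    rw [Finset.iInf_finset_image]
    exact hq.infinite_iInf_stabilizer hG.generates hH.generates
      (fun A hA => cosets_nonempty (hF hA)) hφQ hφM hK
  obtain ⟨h, hh⟩ := hD' _ hF'Q hK'
  obtain ⟨x, hx⟩ := hq.dense h⁻¹
  refine ⟨x⁻¹, fun A hA => hD.mem_toFinset.mpr ⟨smul_mem_cosets (hF hA) x⁻¹, ?_⟩⟩
  have hφh : h⁻¹ ∈ nbhd (T : Set H) R (φ A) :=
    (mul_mem_nbhd_smul_iff h h⁻¹).mp (by simpa using hR _ (hh _ (Finset.mem_image_of_mem φ hA)))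
  have hqx : q x ∈ nbhd (T : Set H) (R + C) (φ A) :=
    mem_nbhd_add_of_wdist_le hH.generates hφh (by rwa [wdist_comm hH.generates])
  have hxA : x ∈ nbhd (S : Set G) (L * (M + (R + C) + C)) A := hq.mem_nbhd_of_apply_mem_nbhd
    (nbhd_subset_nbhd hH.generates (subset_nbhd_of_hdist_lt (hφM A hA)).2 hqx)
  simpa using (mul_mem_nbhd_smul_iff x⁻¹ x).mpr hxA

end CIC
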